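/- Let 0 ≤ ε < 2 and let (ξ, η) : ℝ → ℝ² be a differentiable solution of the reduced Pikovsky–Topaj system. Then the function t ↦ (π − ξ(π − t), π − η(π − t)) is also a solution of the same system. In other words, the system is invariant under the transformation ξ ↦ π − ξ, η ↦ π − η, t ↦ π − t (which shows that the time-shift map from t = 0 to t = π is reversible with respect to the involution (ξ, η) ↦ (π − ξ, π − η)). -/
import Mathlib


open Real

/-- `(ξ, η)` is a solution of the reduced (nonautonomous) Pikovsky–Topaj system
`ξ' = 2ε sin ξ sin η / (2 + ε cos(t − η))`,
`η' = (1 − ε cos(t − η) − 2ε cos ξ cos η) / (2 + ε cos(t − η))`. -/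
def IsReducedPTSol (ε : ℝ) (ξ η : ℝ → ℝ) : Prop :=
  ∀ t : ℝ,
    HasDerivAt ξ
      (2 * ε * Real.sin (ξ t) * Real.sin (η t) / (2 + ε * Real.cos (t - η t))) t ∧
    HasDerivAt η
      ((1 - ε * Real.cos (t - η t) - 2 * ε * Real.cos (ξ t) * Real.cos (η t)) /
        (2 + ε * Real.cos (t - η t))) t

/-- The reduced Pikovsky–Topaj system is invariant under the transformation
`ξ ↦ π − ξ, η ↦ π − η, t ↦ π − t`. -/
theorem reducedPT_halfPeriodReversibility (ε : ℝ) (hε₀ : 0 ≤ ε) (hε₂ : ε < 2) (ξ η : ℝ → ℝ)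
    (h : IsReducedPTSol ε ξ η) :
    IsReducedPTSol ε (fun t => Real.pi - ξ (Real.pi - t))
      (fun t => Real.pi - η (Real.pi - t)) := by
  intro t
  set s := Real.pi - t with hs
  obtain ⟨hξ, hη⟩ := h s
  have htime : HasDerivAt (fun u : ℝ => Real.pi - u) (-1 : ℝ) t := by
    simpa using ((hasDerivAt_id t).const_sub Real.pi)
  have hcosarg : Real.cos (t - (Real.pi - η (Real.pi - t))) = Real.cos (s - η s) := by
    rw [← Real.cos_neg (s - η s)]
    congr 1
    rw [hs]; ring
  constructor
  · have h1 : HasDerivAt (fun u : ℝ => Real.pi - ξ (Real.pi - u))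
        (-(2 * ε * Real.sin (ξ s) * Real.sin (η s) / (2 + ε * Real.cos (s - η s)) * (-1))) t :=
      (hξ.comp t htime).const_sub Real.pi
    convert h1 using 1
    rw [Real.sin_pi_sub, Real.sin_pi_sub, hcosarg, ← hs]
    ring
  · have h1 : HasDerivAt (fun u : ℝ => Real.pi - η (Real.pi - u))
        (-((1 - ε * Real.cos (s - η s) - 2 * ε * Real.cos (ξ s) * Real.cos (η s)) /
          (2 + ε * Real.cos (s - η s)) * (-1))) t :=
      (hη.comp t htime).const_sub Real.pi
    convert h1 using 1
    rw [Real.cos_pi_sub, Real.cos_pi_sub, hcosarg, ← hs]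
    ring
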